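/- arXiv:1408.2671 — 4 statements merged into one kernel-verified Lean document; each statement's English description precedes it below -/
import Mathlib

section
/- The two formulations of the support property are equivalent: for a subset S ⊆ Γ \ {0}, there exists a nondegenerate quadratic form Q on Γ_ℝ such that Q(v) < 0 for every nonzero v ∈ ker Z and Q(γ) > 0 for every γ ∈ S, if and only if there exist a norm ‖·‖ on Γ_ℝ and a constant C > 0 such that ‖γ‖ ≤ C·|Z(γ)| for every γ ∈ S. -/
/-!
If `Q < 0` on `ker Z \ {0}`, then `Z` does not vanish on the closed cone `{Q ≥ 0}` away from `0`,
so compactness of the unit sphere gives `‖v‖ ≤ C ‖Z v‖` on that cone, which contains `S`.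

Conversely, all norms on `Γ_ℝ` are equivalent, so the support property puts `S` in a cone
`‖v‖ ≤ C ‖Z v‖`. Pick a projection `p` onto `ker Z` and a positive definite form `q`. Along the
splitting `ker Z ⊕ ker p`, the form `A ‖Z v‖² - q (p v)` is the orthogonal sum of `-q` and a
positive definite form, hence nondegenerate and negative on `ker Z`; since `q (p v) = O(‖v‖²)`,
it is positive on the cone once `A` is large.
-/

open Metric

section Analysis

variable {E : Type*} [NormedAddCommGroup E] [NormedSpace ℝ E] [FiniteDimensional ℝ E]

theorem QuadraticMap.continuous_of_finiteDimensional (Q : QuadraticForm ℝ E) : Continuous Q := by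
  let B := (Q.associated : LinearMap.BilinForm ℝ E).toContinuousBilinearMap
  have hB : Continuous fun v => B v v := B.continuous.clm_apply continuous_id
  simpa only [B, LinearMap.toContinuousBilinearMap_apply, QuadraticMap.associated_eq_self_apply]
    using hB

theorem QuadraticMap.exists_le_mul_norm_sq (Q : QuadraticForm ℝ E) :
    ∃ M, 0 ≤ M ∧ ∀ v, Q v ≤ M * ‖v‖ ^ 2 := by
  let B := (Q.associated : LinearMap.BilinForm ℝ E).toContinuousBilinearMap
  refine ⟨‖B‖, norm_nonneg B, fun v => ?_⟩
  calc Q v = B v v := by simp [B, QuadraticMap.associated_eq_self_apply]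
    _ ≤ ‖B v v‖ := Real.le_norm_self _
    _ ≤ ‖B‖ * ‖v‖ * ‖v‖ := B.le_opNorm₂ v v
    _ = ‖B‖ * ‖v‖ ^ 2 := by ring

theorem Seminorm.continuous_of_finiteDimensional (p : Seminorm ℝ E) : Continuous p := by
  have := p.convexOn.continuousOn_interior
  rwa [interior_univ, continuousOn_univ] at this

theorem exists_norm_le_mul_of_isClosed_cone {f : E → ℝ} {K : Set E} (hf : Continuous f)
    (hK : IsClosed K) (hK_smul : ∀ v ∈ K, ∀ r : ℝ, 0 < r → r • v ∈ K)
    (hf_smul : ∀ (r : ℝ) v, f (r • v) = ‖r‖ * f v) (hf_pos : ∀ v ∈ K, v ≠ 0 → 0 < f v) :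
    ∃ C > 0, ∀ v ∈ K, ‖v‖ ≤ C * f v := by
  obtain ⟨c, hc, hc_le⟩ := ((isCompact_sphere (0 : E) 1).inter_right hK).exists_forall_le'
    hf.continuousOn (a := 0) fun v hv => hf_pos v hv.2 (ne_zero_of_mem_unit_sphere ⟨v, hv.1⟩)
  refine ⟨c⁻¹, inv_pos.mpr hc, fun v hv => ?_⟩
  rcases eq_or_ne v 0 with rfl | hv0
  · have hf0 : f 0 = 0 := by simpa using hf_smul 0 0
    simp [hf0]
  have hnorm : 0 < ‖v‖ := norm_pos_iff.mpr hv0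
  have hunit : ‖v‖⁻¹ • v ∈ sphere (0 : E) 1 ∩ K :=
    ⟨by simp [norm_smul, hnorm.ne'], hK_smul v hv _ (inv_pos.mpr hnorm)⟩
  have := hc_le _ hunit
  rw [hf_smul, norm_inv, norm_norm, le_inv_mul_iff₀ hnorm] at this
  rw [le_inv_mul_iff₀ hc]
  linarith

theorem Seminorm.exists_norm_le_mul (p : Seminorm ℝ E) (hp : ∀ v, p v = 0 → v = 0) :
    ∃ C > 0, ∀ v, ‖v‖ ≤ C * p v := by
  obtain ⟨C, hC, hle⟩ := exists_norm_le_mul_of_isClosed_cone p.continuous_of_finiteDimensional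
    isClosed_univ (fun _ _ _ _ => trivial) (map_smul_eq_mul p)
    fun v _ hv => (apply_nonneg p v).lt_of_ne' (mt (hp v) hv)
  exact ⟨C, hC, fun v => hle v trivial⟩

theorem exists_norm_le_mul_norm_of_neg_on_ker {F : Type*} [NormedAddCommGroup F]
    [NormedSpace ℝ F] (Z : E →ₗ[ℝ] F) (Q : QuadraticForm ℝ E)
    (hQ : ∀ v, Z v = 0 → v ≠ 0 → Q v < 0) :
    ∃ C > 0, ∀ v, 0 ≤ Q v → ‖v‖ ≤ C * ‖Z v‖ :=
  exists_norm_le_mul_of_isClosed_cone (K := {v | 0 ≤ Q v})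
    (continuous_norm.comp Z.continuous_of_finiteDimensional)
    (isClosed_le continuous_const Q.continuous_of_finiteDimensional)
    (fun v hv r _ => by simpa [QuadraticMap.map_smul] using mul_nonneg (mul_self_nonneg r) hv)
    (fun r v => by simp [norm_smul])
    fun v hv hv0 => norm_pos_iff.mpr fun hZ => (hQ v hZ hv0).not_ge hv

end Analysis

theorem Submodule.exists_isProj {K V : Type*} [DivisionRing K] [AddCommGroup V] [Module K V]
    (m : Submodule K V) : ∃ f : V →ₗ[K] V, LinearMap.IsProj m f := by
  obtain ⟨W, hW⟩ := m.exists_isCompl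
  exact ⟨m.projection W hW,
    ⟨m.projection_apply_mem hW, fun _ => m.projection_apply_of_mem_left hW⟩⟩

section Algebra

variable {R E F : Type*} [Field R] [LinearOrder R] [IsStrictOrderedRing R]
  [AddCommGroup E] [Module R E] [AddCommGroup F] [Module R F]

theorem QuadraticForm.exists_posDef [FiniteDimensional R E] :
    ∃ q : QuadraticForm R E, q.PosDef := by
  let sumSq : QuadraticForm R (Fin (Module.finrank R E) → R) :=
    QuadraticMap.pi fun _ => QuadraticMap.sq
  have hsumSq : sumSq.PosDef := QuadraticMap.posDef_pi_iff.mpr fun _ x hx => mul_self_pos.mpr hx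
  let e := (Module.finBasis R E).equivFun
  exact ⟨sumSq.comp e.toLinearMap, fun v hv => hsumSq (e v) (e.map_ne_zero_iff.mpr hv)⟩

theorem QuadraticMap.separatingLeft_polarBilin_comp_sub_comp {Z : E →ₗ[R] F} {p : E →ₗ[R] E}
    (hp : LinearMap.IsProj (LinearMap.ker Z) p) {qF : QuadraticForm R F}
    {qE : QuadraticForm R E} (hqF : qF.PosDef) (hqE : qE.PosDef) :
    (qF.comp Z - qE.comp p).polarBilin.SeparatingLeft := by
  intro v hv
  have hZp : Z (p v) = 0 := hp.map_mem v
  have hpp : p (p v) = p v := hp.map_id _ (hp.map_mem v)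
  have hpv : p v = 0 := by
    have h := hv (p v)
    simp only [polarBilin_apply_apply, polar, map_add, sub_apply, comp_apply, hZp, hpp, add_zero,
      map_zero, map_add_self, nsmul_eq_mul, Nat.cast_ofNat] at h
    exact hqE.anisotropic _ (by linarith)
  have hZv : Z v = 0 := by
    have h := hv v
    simp only [polarBilin_apply_apply, polar, sub_apply, comp_apply, hpv, map_zero, map_add_self,
      nsmul_eq_mul, Nat.cast_ofNat] at h
    exact hqF.anisotropic _ (by linarith)
  rw [← hp.map_id v hZv, hpv]

end Algebra

theorem exists_quadraticForm_pos_of_norm_le_mul_norm {E F : Type*} [NormedAddCommGroup E]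
    [NormedSpace ℝ E] [FiniteDimensional ℝ E] [NormedAddCommGroup F] [InnerProductSpace ℝ F]
    (Z : E →ₗ[ℝ] F) (C : ℝ) :
    ∃ Q : QuadraticForm ℝ E, Q.polarBilin.SeparatingLeft ∧ (∀ v, Z v = 0 → v ≠ 0 → Q v < 0) ∧
      ∀ v, v ≠ 0 → ‖v‖ ≤ C * ‖Z v‖ → 0 < Q v := by
  obtain ⟨p, hp⟩ := (LinearMap.ker Z).exists_isProj
  obtain ⟨qE, hqE⟩ := QuadraticForm.exists_posDef (R := ℝ) (E := E)
  obtain ⟨M, hM, hqE_le⟩ := (qE.comp p).exists_le_mul_norm_sq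
  set A := M * C ^ 2 + 1
  set qF : QuadraticForm ℝ F := A • LinearMap.BilinMap.toQuadraticMap (innerₗ F)
  have hqF_apply (z : F) : qF z = A * ‖z‖ ^ 2 := by simp [qF]
  have hqF : qF.PosDef := fun z hz => by
    rw [hqF_apply]
    exact mul_pos (by positivity) (pow_pos (norm_pos_iff.mpr hz) 2)
  refine ⟨qF.comp Z - qE.comp p, QuadraticMap.separatingLeft_polarBilin_comp_sub_comp hp hqF hqE,
    fun v hZv hv => ?_, fun v hv hle => ?_⟩
  · simpa [hZv, hp.map_id v hZv] using hqE v hv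
  have hZv : 0 < ‖Z v‖ :=
    norm_pos_iff.mpr fun hZv => hv (norm_le_zero_iff.mp (by simpa [hZv] using hle))
  calc 0 < ‖Z v‖ ^ 2 := by positivity
    _ = A * ‖Z v‖ ^ 2 - M * (C * ‖Z v‖) ^ 2 := by ring
    _ ≤ A * ‖Z v‖ ^ 2 - M * ‖v‖ ^ 2 := by gcongr
    _ ≤ (qF.comp Z - qE.comp p) v := by
      rw [sub_apply, QuadraticMap.comp_apply, hqF_apply]
      linarith [hqE_le v]

/-- For `Γ` a free abelian group of finite rank (realized as `Fin n → ℤ`),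
`Γ_ℝ = Fin n → ℝ`, `Z : Γ_ℝ → ℂ` an `ℝ`-linear map, and `S ⊆ Γ \ {0}`:
there exists a nondegenerate quadratic form `Q` on `Γ_ℝ` with `Q < 0` on `ker Z \ {0}` and
`Q > 0` on `S` iff there exist a norm `N` on `Γ_ℝ` and `C > 0` with `N γ ≤ C * |Z γ|`
for all `γ ∈ S`. -/
theorem support_property_equivalence {n : ℕ} (Z : (Fin n → ℝ) →ₗ[ℝ] ℂ)
    (S : Set (Fin n → ℤ)) (h0 : 0 ∉ S) :
    (∃ Q : QuadraticForm ℝ (Fin n → ℝ),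
        (∀ v : Fin n → ℝ, (∀ w : Fin n → ℝ, Q (v + w) = Q v + Q w) → v = 0) ∧
        (∀ v : Fin n → ℝ, Z v = 0 → v ≠ 0 → Q v < 0) ∧
        (∀ γ ∈ S, 0 < Q (fun j => (γ j : ℝ)))) ↔
    (∃ (N : (Fin n → ℝ) → ℝ) (C : ℝ), 0 < C ∧
        (∀ v w : Fin n → ℝ, N (v + w) ≤ N v + N w) ∧
        (∀ (r : ℝ) (v : Fin n → ℝ), N (r • v) = |r| * N v) ∧
        (∀ v : Fin n → ℝ, N v = 0 → v = 0) ∧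
        (∀ γ ∈ S, N (fun j => (γ j : ℝ)) ≤ C * ‖Z (fun j => (γ j : ℝ))‖)) := by
  constructor
  · rintro ⟨Q, -, hQ_ker, hQ_S⟩
    obtain ⟨C, hC, hle⟩ := exists_norm_le_mul_norm_of_neg_on_ker Z Q hQ_ker
    exact ⟨(‖·‖), C, hC, norm_add_le, fun r v => by simp [norm_smul],
      fun v => norm_eq_zero.mp, fun γ hγ => hle _ (hQ_S γ hγ).le⟩
  · rintro ⟨N, C, -, hN_add, hN_smul, hN_zero, hN_S⟩
    obtain ⟨c, hc, hc_le⟩ := (Seminorm.of (𝕜 := ℝ) N hN_add fun r v => by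
      rw [hN_smul, Real.norm_eq_abs]).exists_norm_le_mul hN_zero
    obtain ⟨Q, hQ_nondeg, hQ_ker, hQ_pos⟩ := exists_quadraticForm_pos_of_norm_le_mul_norm Z (c * C)
    refine ⟨Q, fun v hv => hQ_nondeg v fun w => ?_, hQ_ker, fun γ hγ => hQ_pos _ ?_ ?_⟩
    · rw [QuadraticMap.polarBilin_apply_apply, QuadraticMap.polar, hv w]
      ring
    · intro h
      have : γ = 0 := funext fun j => by simpa using congrFun h j
      exact h0 (this ▸ hγ)
    · calc _ ≤ c * N _ := hc_le _
        _ ≤ c * (C * ‖Z _‖) := by gcongr; exact hN_S γ hγ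
        _ = c * C * ‖Z _‖ := by ring
end

section
/- Existence and uniqueness of quadratic refinements with prescribed values on a basis: let (γ₁, …, γ_n) be a ℤ-basis of Γ and let ε₁, …, ε_n ∈ {±1}. Then there exists exactly one quadratic refinement σ of ⟨·,·⟩ with σ(γᵢ) = εᵢ for all i = 1, …, n. In particular, quadratic refinements of ⟨·,·⟩ always exist, but are not unique (when n ≥ 1). -/
/-!
Over `Γ = ι → ℤ`, an alternating form `B` is `C - Cᵀ` for its strictly upper triangular part `C`,
and since `C (x + y) (x + y) - C x x - C y y = C x y + C y x ≡ B x y (mod 2)`, the function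
`x ↦ (-1) ^ C x x` is a quadratic refinement. The quotient of two quadratic refinements is a
homomorphism `Γ → ℤˣ`, so refinements form a torsor under `Hom(Γ, ℤˣ) ≅ (ℤˣ)ⁿ`: multiplying by
characters realises any prescribed values on the basis, and a character trivial on the basis is
trivial.
-/

open Finset

section

variable {Γ : Type*} [AddCommGroup Γ]

def IsQuadraticRefinement (B : Γ → Γ → ℤ) (σ : Γ → ℤˣ) : Prop :=
  ∀ γ₁ γ₂, σ γ₁ * σ γ₂ = (-1 : ℤˣ) ^ (B γ₁ γ₂) * σ (γ₁ + γ₂)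

namespace IsQuadraticRefinement

variable {B : Γ → Γ → ℤ} {σ τ : Γ → ℤˣ}

theorem mul_apply_add (hσ : IsQuadraticRefinement B σ) (hτ : IsQuadraticRefinement B τ)
    (x y : Γ) :
    σ (x + y) * τ (x + y) = σ x * τ x * (σ y * τ y) := by
  calc σ (x + y) * τ (x + y)
      = ((-1 : ℤˣ) ^ B x y * (-1 : ℤˣ) ^ B x y) * (σ (x + y) * τ (x + y)) := by
        rw [Int.units_mul_self, one_mul]
    _ = ((-1 : ℤˣ) ^ B x y * σ (x + y)) * ((-1 : ℤˣ) ^ B x y * τ (x + y)) :=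
        mul_mul_mul_comm _ _ _ _
    _ = σ x * τ x * (σ y * τ y) := by rw [← hσ, ← hτ, mul_mul_mul_comm]

theorem mul_left (hσ : IsQuadraticRefinement B σ) {χ : Γ → ℤˣ}
    (hχ : ∀ x y, χ (x + y) = χ x * χ y) : IsQuadraticRefinement B fun x => χ x * σ x := by
  intro x y
  change χ x * σ x * (χ y * σ y) = _ * (χ (x + y) * σ (x + y))
  rw [mul_mul_mul_comm, hσ, hχ, mul_left_comm]

end IsQuadraticRefinement

theorem isQuadraticRefinement_sub_flip (C : LinearMap.BilinForm ℤ Γ) :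
    IsQuadraticRefinement (fun x y => (C - C.flip) x y) fun x => (C x x).negOnePow := by
  intro x y
  simp only [LinearMap.sub_apply, LinearMap.BilinForm.flip_apply, map_add, LinearMap.add_apply]
  rw [← Int.negOnePow_def, ← Int.negOnePow_add, ← Int.negOnePow_add, Int.negOnePow_eq_iff]
  exact ⟨-C x y, by ring⟩

def LinearMap.BilinForm.ofBiadditive (B : Γ → Γ → ℤ)
    (h₁ : ∀ x y z, B (x + y) z = B x z + B y z) (h₂ : ∀ x y z, B x (y + z) = B x y + B x z) :
    LinearMap.BilinForm ℤ Γ :=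
  LinearMap.mk₂ ℤ B h₁ (fun c x y => map_zsmul (AddMonoidHom.mk' (B · y) (h₁ · · y)) c x) h₂
    (fun c x y => map_zsmul (AddMonoidHom.mk' (B x) (h₂ x)) c y)

end

theorem IsQuadraticRefinement.eq_of_forall_single {ι : Type*} [Fintype ι] [DecidableEq ι]
    {B : (ι → ℤ) → (ι → ℤ) → ℤ} {σ τ : (ι → ℤ) → ℤˣ}
    (hσ : IsQuadraticRefinement B σ) (hτ : IsQuadraticRefinement B τ)
    (h : ∀ i, σ (Pi.single i 1) = τ (Pi.single i 1)) : σ = τ := by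
  let f : (ι → ℤ) →+ Additive ℤˣ :=
    AddMonoidHom.mk' (fun x => Additive.ofMul (σ x * τ x))
      fun x y => congrArg Additive.ofMul (hσ.mul_apply_add hτ x y)
  have hf : f = 0 := by
    ext i
    simp [f, h i, Int.units_mul_self]
  funext x
  have hx : σ x * τ x = τ x * τ x :=
    (Additive.ofMul.injective (DFunLike.congr_fun hf x)).trans (Int.units_mul_self _).symm
  exact mul_right_cancel hx

theorem exists_map_add_eq_mul_and_map_single {ι M : Type*} [Fintype ι] [DecidableEq ι]
    [CommGroup M] (a : ι → M) :
    ∃ χ : (ι → ℤ) → M, (∀ x y, χ (x + y) = χ x * χ y) ∧ ∀ i, χ (Pi.single i 1) = a i :=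
  ⟨fun x => ∏ i, a i ^ x i, fun x y => by simp [zpow_add, prod_mul_distrib],
    fun i => by simp [Pi.single_apply]⟩

theorem LinearMap.BilinForm.IsAlt.exists_eq_sub_flip {R ι : Type*} [CommRing R] [Fintype ι]
    [LinearOrder ι] {B : LinearMap.BilinForm R (ι → R)} (hB : B.IsAlt) :
    ∃ C : LinearMap.BilinForm R (ι → R), B = C - C.flip := by
  refine ⟨Matrix.toLinearMap₂' R (.of fun i j => if i < j then B (Pi.single i 1) (Pi.single j 1)
    else 0), LinearMap.ext_basis (Pi.basisFun R ι) (Pi.basisFun R ι) fun i j => ?_⟩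
  rcases lt_trichotomy i j with h | rfl | h
  · simp [Matrix.toLinearMap₂'_apply', h, h.not_gt]
  · simp [Matrix.toLinearMap₂'_apply', hB.self_eq_zero]
  · simp [Matrix.toLinearMap₂'_apply', h, h.not_gt]
    exact (hB.neg_eq _ _).symm

theorem exists_isQuadraticRefinement_forall_single {ι : Type*} [Fintype ι] [LinearOrder ι]
    {B : LinearMap.BilinForm ℤ (ι → ℤ)} (hB : B.IsAlt) (ε : ι → ℤˣ) :
    ∃ σ, IsQuadraticRefinement (fun x y => B x y) σ ∧ ∀ i, σ (Pi.single i 1) = ε i := by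
  obtain ⟨C, rfl⟩ := hB.exists_eq_sub_flip
  obtain ⟨χ, hχ, hχ_single⟩ := exists_map_add_eq_mul_and_map_single fun i =>
    ε i * (C (Pi.single i 1) (Pi.single i 1)).negOnePow
  refine ⟨_, (isQuadraticRefinement_sub_flip C).mul_left hχ, fun i => ?_⟩
  rw [hχ_single, mul_assoc, Int.units_mul_self, mul_one]

/-- Existence and uniqueness of quadratic refinements with prescribed values on
a `ℤ`-basis of `Γ = Fin n → ℤ` (here the standard basis `Pi.single i 1`): for any signs
`ε : Fin n → ℤˣ` there is exactly one quadratic refinement `σ` of the skew-symmetric form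
`B` with `σ (Pi.single i 1) = ε i` for all `i`. In particular quadratic refinements always
exist, but are not unique when `n ≥ 1`. -/
theorem quadratic_refinement_exists_unique {n : ℕ}
    (B : (Fin n → ℤ) → (Fin n → ℤ) → ℤ)
    (hB1 : ∀ x y z : Fin n → ℤ, B (x + y) z = B x z + B y z)
    (hB2 : ∀ x y z : Fin n → ℤ, B x (y + z) = B x y + B x z)
    (hskew : ∀ x y : Fin n → ℤ, B x y = -B y x)
    (ε : Fin n → ℤˣ) :
    (∃! σ : (Fin n → ℤ) → ℤˣ,
      (∀ γ₁ γ₂, σ γ₁ * σ γ₂ = (-1 : ℤˣ) ^ (B γ₁ γ₂) * σ (γ₁ + γ₂)) ∧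
      (∀ i, σ (Pi.single i 1) = ε i)) ∧
    (∃ σ : (Fin n → ℤ) → ℤˣ,
      ∀ γ₁ γ₂, σ γ₁ * σ γ₂ = (-1 : ℤˣ) ^ (B γ₁ γ₂) * σ (γ₁ + γ₂)) ∧
    (1 ≤ n → ∃ σ τ : (Fin n → ℤ) → ℤˣ,
      (∀ γ₁ γ₂, σ γ₁ * σ γ₂ = (-1 : ℤˣ) ^ (B γ₁ γ₂) * σ (γ₁ + γ₂)) ∧
      (∀ γ₁ γ₂, τ γ₁ * τ γ₂ = (-1 : ℤˣ) ^ (B γ₁ γ₂) * τ (γ₁ + γ₂)) ∧ σ ≠ τ) := by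
  have hB : (LinearMap.BilinForm.ofBiadditive B hB1 hB2).IsAlt := fun x => by
    have := hskew x x
    change B x x = 0
    omega
  have hex := exists_isQuadraticRefinement_forall_single hB
  refine ⟨?_, ?_, fun hn => ?_⟩
  · obtain ⟨σ, hσ, hσε⟩ := hex ε
    exact ⟨σ, ⟨hσ, hσε⟩, fun τ ⟨hτ, hτε⟩ =>
      (hσ.eq_of_forall_single hτ fun i => (hσε i).trans (hτε i).symm).symm⟩
  · obtain ⟨σ, hσ, -⟩ := hex ε
    exact ⟨σ, hσ⟩
  · obtain ⟨σ, hσ, hσ_single⟩ := hex 1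
    obtain ⟨τ, hτ, hτ_single⟩ := hex (-1)
    refine ⟨σ, τ, hσ, hτ, fun h => units_ne_neg_self (1 : ℤˣ) ?_⟩
    have h₀ := hσ_single ⟨0, hn⟩
    rw [h, hτ_single] at h₀
    exact h₀.symm
end

section
/- The bracket defined on generators by [z^{m₁}∂_{n₁}, z^{m₂}∂_{n₂}] := z^{m₁+m₂} ∂_{n₁(m₂)·n₂ − n₂(m₁)·n₁} and extended k-bilinearly makes k[M] ⊗_ℤ N a Lie algebra over k: the bracket is alternating and satisfies the Jacobi identity. -/
/-!
The bracket is bi-additive, so both identities can be checked on generators `z^a ∂_u`.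
On two generators the bracket is visibly antisymmetric and vanishes when they coincide, which
gives alternation without dividing by 2. For three generators all terms of the Jacobi sum lie
in degree `a + b + c`, and their coefficients cancel because the pairing is linear in `∂` and
additive in the exponent.
-/

open Finsupp

namespace AddMonoidHom

variable {G : Type*} [AddCommGroup G]

def jacobiator (B : G →+ G →+ G) (x y z : G) : G :=
  B x (B y z) + B y (B z x) + B z (B x y)

variable (B : G →+ G →+ G)

theorem jacobiator_rotate (x y z : G) : B.jacobiator x y z = B.jacobiator y z x := by
  simp only [jacobiator]; abel

theorem jacobiator_add_left (x x' y z : G) :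
    B.jacobiator (x + x') y z = B.jacobiator x y z + B.jacobiator x' y z := by
  simp only [jacobiator, map_add, add_apply]; abel

end AddMonoidHom

namespace Finsupp

variable {α M N : Type*} [AddCommGroup M] [AddCommGroup N]

theorem addHom_self_eq_zero_of_single (B : (α →₀ M) →+ (α →₀ M) →+ N)
    (h_antisymm : ∀ a b u v, B (single a u) (single b v) = -B (single b v) (single a u))
    (h_diag : ∀ a u, B (single a u) (single a u) = 0) (x : α →₀ M) : B x x = 0 := by
  have h_flip : B.flip = -B :=
    addHom_ext fun b v => addHom_ext fun a u => h_antisymm a b u v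
  induction x using Finsupp.induction_linear with
  | zero => simp
  | single a u => exact h_diag a u
  | add x y hx hy =>
    have hyx : B y x = -B x y := DFunLike.congr_fun (DFunLike.congr_fun h_flip x) y
    simp only [map_add, AddMonoidHom.add_apply, hx, hy, hyx]
    abel

theorem jacobiator_eq_zero_of_single_left (B : (α →₀ M) →+ (α →₀ M) →+ (α →₀ M))
    {y z : α →₀ M} (h : ∀ a u, B.jacobiator (single a u) y z = 0) (x : α →₀ M) :
    B.jacobiator x y z = 0 := by
  induction x using Finsupp.induction_linear with
  | zero => simp [AddMonoidHom.jacobiator]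
  | single a u => exact h a u
  | add x x' hx hx' => rw [B.jacobiator_add_left, hx, hx', add_zero]

theorem jacobiator_eq_zero_of_single (B : (α →₀ M) →+ (α →₀ M) →+ (α →₀ M))
    (h : ∀ a b c u v w, B.jacobiator (single a u) (single b v) (single c w) = 0)
    (x y z : α →₀ M) : B.jacobiator x y z = 0 := by
  refine jacobiator_eq_zero_of_single_left B (fun a u => ?_) x
  rw [B.jacobiator_rotate]
  refine jacobiator_eq_zero_of_single_left B (fun b v => ?_) y
  rw [B.jacobiator_rotate]
  refine jacobiator_eq_zero_of_single_left B (fun c w => ?_) z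
  rw [B.jacobiator_rotate]
  exact h a b c u v w

end Finsupp

noncomputable section PairingBracket

variable {k α V : Type*} [CommRing k] [AddCommMonoid α] [AddCommGroup V] [Module k V]
  (p : α →+ V →ₗ[k] k)

def pairingBracketTerm (a₁ a₂ : α) (v₁ v₂ : V) : α →₀ V :=
  single (a₁ + a₂) (p a₂ v₁ • v₂ - p a₁ v₂ • v₁)

theorem pairingBracketTerm_add_left (a₁ a₂ : α) (v₁ v₁' v₂ : V) :
    pairingBracketTerm p a₁ a₂ (v₁ + v₁') v₂ =
      pairingBracketTerm p a₁ a₂ v₁ v₂ + pairingBracketTerm p a₁ a₂ v₁' v₂ := by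
  simp only [pairingBracketTerm, ← single_add, map_add, add_smul, smul_add]
  congr 1; abel

theorem pairingBracketTerm_add_right (a₁ a₂ : α) (v₁ v₂ v₂' : V) :
    pairingBracketTerm p a₁ a₂ v₁ (v₂ + v₂') =
      pairingBracketTerm p a₁ a₂ v₁ v₂ + pairingBracketTerm p a₁ a₂ v₁ v₂' := by
  simp only [pairingBracketTerm, ← single_add, map_add, add_smul, smul_add]
  congr 1; abel

def pairingBracket : (α →₀ V) →+ (α →₀ V) →+ (α →₀ V) :=
  AddMonoidHom.mk'
    (fun f => AddMonoidHom.mk'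
      (fun g => f.sum fun a₁ v₁ => g.sum fun a₂ v₂ => pairingBracketTerm p a₁ a₂ v₁ v₂)
      fun g g' => by
        rw [← sum_add]
        refine sum_congr fun a₁ _ => sum_add_index' (fun _ => ?_) fun a₂ => ?_
        · simp [pairingBracketTerm]
        · exact pairingBracketTerm_add_right p a₁ a₂ _)
    fun f f' => AddMonoidHom.ext fun g => by
      refine sum_add_index'
        (h := fun a₁ v₁ => g.sum fun a₂ v₂ => pairingBracketTerm p a₁ a₂ v₁ v₂)
        (fun _ => ?_) fun _ _ _ => ?_
      · simp [pairingBracketTerm]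
      · simp only [pairingBracketTerm_add_left, sum_add]

theorem pairingBracket_single (a b : α) (u v : V) :
    pairingBracket p (single a u) (single b v) = single (a + b) (p b u • v - p a v • u) := by
  simp [pairingBracket, pairingBracketTerm]

theorem pairingBracket_self (x : α →₀ V) : pairingBracket p x x = 0 := by
  refine addHom_self_eq_zero_of_single _ (fun a b u v => ?_) (fun a u => ?_) x
  · rw [pairingBracket_single, pairingBracket_single, add_comm b a, ← single_neg, neg_sub]
  · rw [pairingBracket_single, sub_self, single_zero]

theorem jacobiator_pairingBracket_single (a b c : α) (u v w : V) :
    (pairingBracket p).jacobiator (single a u) (single b v) (single c w) = 0 := by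
  simp only [AddMonoidHom.jacobiator, pairingBracket_single]
  rw [show b + (c + a) = a + (b + c) by abel, show c + (a + b) = a + (b + c) by abel,
    ← single_add, ← single_add, ← single_zero (a + (b + c))]
  congr 1
  simp only [map_add, map_sub, map_smul, LinearMap.add_apply, smul_eq_mul]
  module

theorem jacobiator_pairingBracket (x y z : α →₀ V) : (pairingBracket p).jacobiator x y z = 0 :=
  jacobiator_eq_zero_of_single _ (jacobiator_pairingBracket_single p) x y z

end PairingBracket

def intDotPairing (k : Type*) [CommRing k] (r : ℕ) : (Fin r → ℤ) →+ (Fin r → k) →ₗ[k] k :=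
  (dotProductBilin k k : (Fin r → k) →ₗ[k] (Fin r → k) →ₗ[k] k).flip.toAddMonoidHom.comp
    ((Int.castAddHom k).compLeft (Fin r))

theorem tropical_vertex_bracket_is_lie_algebra_general {k : Type*} [Field k] {r : ℕ} :
    let dot : (Fin r → k) → (Fin r → ℤ) → k := fun v m => ∑ i, v i * (m i : k)
    let br : ((Fin r → ℤ) →₀ (Fin r → k)) → ((Fin r → ℤ) →₀ (Fin r → k)) →
        ((Fin r → ℤ) →₀ (Fin r → k)) :=
      fun f g => f.sum fun m₁ v₁ => g.sum fun m₂ v₂ =>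
        Finsupp.single (m₁ + m₂) (dot v₁ m₂ • v₂ - dot v₂ m₁ • v₁)
    (∀ x, br x x = 0) ∧
    (∀ x y z, br x (br y z) + br y (br z x) + br z (br x y) = 0) := by
  -- `br` is `pairingBracket (intDotPairing k r)` up to unfolding definitions.
  exact ⟨pairingBracket_self (intDotPairing k r), jacobiator_pairingBracket (intDotPairing k r)⟩

/-- Let `M = Fin r → ℤ` be a free abelian group of finite rank and
`N = Fin r → ℤ` its dual (evaluation `n(m) = ∑ i, n i * m i`), `k` a field of characteristic
`0`. The `k`-module `k[M] ⊗_ℤ N` is realized as `M →₀ (Fin r → k)`, with `z^m ∂_n`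
corresponding to `Finsupp.single m (fun i => (n i : k))`. The bracket defined on generators
by `[z^{m₁}∂_{n₁}, z^{m₂}∂_{n₂}] = z^{m₁+m₂} ∂_{n₁(m₂)·n₂ − n₂(m₁)·n₁}` and extended
`k`-bilinearly makes it a Lie algebra: the bracket is alternating and satisfies the
Jacobi identity. -/
theorem tropical_vertex_bracket_is_lie_algebra {k : Type*} [Field k] [CharZero k] {r : ℕ} :
    let dot : (Fin r → k) → (Fin r → ℤ) → k := fun v m => ∑ i, v i * (m i : k)
    let br : ((Fin r → ℤ) →₀ (Fin r → k)) → ((Fin r → ℤ) →₀ (Fin r → k)) →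
        ((Fin r → ℤ) →₀ (Fin r → k)) :=
      fun f g => f.sum fun m₁ v₁ => g.sum fun m₂ v₂ =>
        Finsupp.single (m₁ + m₂) (dot v₁ m₂ • v₂ - dot v₂ m₁ • v₁)
    (∀ x, br x x = 0) ∧
    (∀ x y z, br x (br y z) + br y (br z x) + br z (br x y) = 0) :=
  tropical_vertex_bracket_is_lie_algebra_general
end

section
/- Let k ≥ 1 and a, b be integers, set ε := (−1)^{kab}, and let U := {(x,y) ∈ ℝ² : x > 0, y > 0, 1 − ε·x^a·y^b > 0} (integer powers of positive reals). Define F : U → ℝ² by F(x,y) = (x·(1 − ε x^a y^b)^{−kb}, y·(1 − ε x^a y^b)^{ka}) (the automorphism θ^{(k)}_{(a,b)}). Then F is differentiable on U, and for every (x,y) ∈ U the Jacobian determinant of F at (x,y) equals F₁(x,y)·F₂(x,y)/(x·y), where F = (F₁, F₂). Equivalently, F preserves the 2-form (xy)^{-1} dx∧dy, i.e. θ^{(k)}_{(a,b)} is a symplectomorphism for the symplectic form −k^{-1}(xy)^{-1} dx∧dy. -/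
/-!
Write `F(x, y) = (x g^m, y g^n)` with `g = 1 - ε x^a y^b`, `m = -kb`, `n = ka`. Expanding the
2×2 Jacobian, the terms quadratic in `dg` cancel, leaving
`det DF = g^(m+n-1) (g + m x ∂ₓg + n y ∂_y g)`. Since `x^a y^b` is a monomial,
`x ∂ₓg = a (g - 1)` and `y ∂_y g = b (g - 1)`, so the bracket is `g + (ma + nb)(g - 1) = g`.
Hence `det DF = g^(m+n) = F₁ F₂ / (x y)`.
-/

open ContinuousLinearMap

theorem ContinuousLinearMap.det_prod {𝕜 : Type*} [Field 𝕜] [TopologicalSpace 𝕜]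
    [IsTopologicalRing 𝕜] (L₁ L₂ : 𝕜 × 𝕜 →L[𝕜] 𝕜) :
    (L₁.prod L₂).det = L₁ (1, 0) * L₂ (0, 1) - L₁ (0, 1) * L₂ (1, 0) := by
  rw [ContinuousLinearMap.det, ← LinearMap.det_toMatrix (Module.Basis.finTwoProd 𝕜),
    Matrix.det_fin_two]
  simp [LinearMap.toMatrix_apply]

section

variable {p : ℝ × ℝ} {G : ℝ × ℝ →L[ℝ] ℝ}

theorem hasFDerivAt_const_mul_zpow_mul_zpow (c : ℝ) (a b : ℤ) (hx : p.1 ≠ 0) (hy : p.2 ≠ 0) :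
    HasFDerivAt (fun q : ℝ × ℝ => c * q.1 ^ a * q.2 ^ b)
      ((c * p.1 ^ a * p.2 ^ b) • ((a / p.1) • fst ℝ ℝ ℝ + (b / p.2) • snd ℝ ℝ ℝ)) p := by
  have hxa := (hasDerivAt_zpow a p.1 (Or.inl hx)).comp_hasFDerivAt p
    (hasFDerivAt_fst : HasFDerivAt _ (fst ℝ ℝ ℝ) p)
  have hyb := (hasDerivAt_zpow b p.2 (Or.inl hy)).comp_hasFDerivAt p
    (hasFDerivAt_snd : HasFDerivAt _ (snd ℝ ℝ ℝ) p)
  refine ((hxa.const_mul c).mul hyb).congr_fderiv ?_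
  ext <;> simp [zpow_sub_one₀ hx, zpow_sub_one₀ hy] <;> field_simp

theorem hasFDerivAt_mul_zpow_prod {g : ℝ × ℝ → ℝ} (m n : ℤ) (hg : HasFDerivAt g G p)
    (hgp : g p ≠ 0) :
    HasFDerivAt (fun q => (q.1 * g q ^ m, q.2 * g q ^ n))
      ((g p ^ m • fst ℝ ℝ ℝ + (p.1 * m * g p ^ (m - 1)) • G).prod
        (g p ^ n • snd ℝ ℝ ℝ + (p.2 * n * g p ^ (n - 1)) • G)) p := by
  have hgm := (hasDerivAt_zpow m (g p) (Or.inl hgp)).comp_hasFDerivAt p hg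
  have hgn := (hasDerivAt_zpow n (g p) (Or.inl hgp)).comp_hasFDerivAt p hg
  refine ((hasFDerivAt_fst.mul hgm).prodMk (hasFDerivAt_snd.mul hgn)).congr_fderiv ?_
  ext <;> simp <;> ring

theorem det_zpow_smul_add_prod (m n : ℤ) {u : ℝ} (x y : ℝ) (hu : u ≠ 0) :
    ((u ^ m • fst ℝ ℝ ℝ + (x * m * u ^ (m - 1)) • G).prod
        (u ^ n • snd ℝ ℝ ℝ + (y * n * u ^ (n - 1)) • G)).det
      = u ^ (m + n - 1) * (u + m * (x * G (1, 0)) + n * (y * G (0, 1))) := by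
  rw [det_prod]
  simp only [add_apply, smul_apply, coe_fst', coe_snd', smul_eq_mul, zpow_sub_one₀ hu,
    zpow_add₀ hu]
  field_simp
  ring

end

theorem wall_crossing_automorphism_symplectic_general (k : ℕ) (a b : ℤ) :
    let ε : ℝ := (-1 : ℝ) ^ ((k : ℤ) * a * b)
    let U : Set (ℝ × ℝ) := {p | 0 < p.1 ∧ 0 < p.2 ∧ 0 < 1 - ε * p.1 ^ a * p.2 ^ b}
    let F : ℝ × ℝ → ℝ × ℝ := fun p =>
      (p.1 * (1 - ε * p.1 ^ a * p.2 ^ b) ^ (-((k : ℤ) * b)),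
       p.2 * (1 - ε * p.1 ^ a * p.2 ^ b) ^ ((k : ℤ) * a))
    ∀ p ∈ U, DifferentiableAt ℝ F p ∧
      (fderiv ℝ F p).det = (F p).1 * (F p).2 / (p.1 * p.2) := by
  intro ε U F p ⟨hx, hy, hg⟩
  set G := -((ε * p.1 ^ a * p.2 ^ b) • ((a / p.1 : ℝ) • fst ℝ ℝ ℝ + (b / p.2 : ℝ) • snd ℝ ℝ ℝ))
  have hG : HasFDerivAt (fun q : ℝ × ℝ => 1 - ε * q.1 ^ a * q.2 ^ b) G p :=
    (hasFDerivAt_const_mul_zpow_mul_zpow ε a b hx.ne' hy.ne').const_sub 1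
  have hF := hasFDerivAt_mul_zpow_prod (-((k : ℤ) * b)) (k * a) hG hg.ne'
  refine ⟨hF.differentiableAt, ?_⟩
  have euler : ((-((k : ℤ) * b) : ℤ) : ℝ) * (p.1 * G (1, 0))
      + ((k * a : ℤ) : ℝ) * (p.2 * G (0, 1)) = 0 := by
    simp only [G, neg_apply, add_apply, smul_apply, coe_fst', coe_snd', smul_eq_mul]
    push_cast
    field_simp
    ring
  rw [hF.fderiv, det_zpow_smul_add_prod _ _ _ _ hg.ne', add_assoc, euler, add_zero,
    ← zpow_add_one₀ hg.ne', sub_add_cancel, zpow_add₀ hg.ne']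
  simp only [F]
  field_simp

/-- For integers `a b` and `k ≥ 1`, with `ε = (-1)^{kab}`, the wall-crossing
automorphism `F = θ^{(k)}_{(a,b)} : (x,y) ↦ (x(1-εx^a y^b)^{-kb}, y(1-εx^a y^b)^{ka})` is
differentiable on `U = {x > 0, y > 0, 1 - εx^a y^b > 0}`, and its Jacobian determinant at
every `(x,y) ∈ U` equals `F₁(x,y)·F₂(x,y)/(x·y)`; i.e. `F` preserves `(xy)⁻¹ dx∧dy`, so it
is a symplectomorphism for `-k⁻¹(xy)⁻¹ dx∧dy`. -/
theorem wall_crossing_automorphism_symplectic (k : ℕ) (hk : 1 ≤ k) (a b : ℤ) :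
    let ε : ℝ := (-1 : ℝ) ^ ((k : ℤ) * a * b)
    let U : Set (ℝ × ℝ) := {p | 0 < p.1 ∧ 0 < p.2 ∧ 0 < 1 - ε * p.1 ^ a * p.2 ^ b}
    let F : ℝ × ℝ → ℝ × ℝ := fun p =>
      (p.1 * (1 - ε * p.1 ^ a * p.2 ^ b) ^ (-((k : ℤ) * b)),
       p.2 * (1 - ε * p.1 ^ a * p.2 ^ b) ^ ((k : ℤ) * a))
    ∀ p ∈ U, DifferentiableAt ℝ F p ∧
      (fderiv ℝ F p).det = (F p).1 * (F p).2 / (p.1 * p.2) :=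
  wall_crossing_automorphism_symplectic_general k a b
end
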